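/- For symmetric n×n real matrices A and B, the (i+j-1)-th largest eigenvalue of A + B is at most the sum of the i-th largest eigenvalue of A and the j-th largest eigenvalue of B (Weyl's inequality), whenever i + j - 1 ≤ n. -/
import Mathlib

open scoped RealInnerProductSpace

section aux

variable {n : ℕ}

/-- equal multisets of values gives a permutation. -/
lemma weyl_exists_perm {f g : Fin n → ℝ}
    (h : Multiset.map f Finset.univ.val = Multiset.map g Finset.univ.val) :
    ∃ σ : Equiv.Perm (Fin n), f = g ∘ σ := by
  classical
  have hcard : ∀ r : ℝ, Fintype.card {k // f k = r} = Fintype.card {k // g k = r} := by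
    intro r
    have h2 := congrArg (Multiset.count r) h
    rw [Multiset.count_map, Multiset.count_map] at h2
    have e1 : ∀ h : Fin n → ℝ,
        Fintype.card {k // h k = r} = Multiset.count r (Multiset.map h Finset.univ.val) := by
      intro h
      rw [Multiset.count_map, Fintype.card_subtype]
      simp only [Finset.card, Finset.filter_val]
      congr 1
      exact Multiset.filter_congr fun x _ => eq_comm
    rw [e1, e1]
    exact congrArg (Multiset.count r) h
  refine ⟨Equiv.ofFiberEquiv (fun r => Fintype.equivOfCardEq (hcard r)), funext fun k => ?_⟩
  exact (Equiv.ofFiberEquiv_map (fun r => Fintype.equivOfCardEq (hcard r)) k).symm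

variable (Bas : OrthonormalBasis (Fin n) ℝ (EuclideanSpace ℝ (Fin n)))
  (T : EuclideanSpace ℝ (Fin n) →ₗ[ℝ] EuclideanSpace ℝ (Fin n)) (μ : Fin n → ℝ)

lemma weyl_quad (hT : ∀ k, T (Bas k) = μ k • Bas k) (x : EuclideanSpace ℝ (Fin n)) :
    ⟪x, T x⟫ = ∑ k, μ k * (Bas.repr x k)^2 := by
  have hTx : T x = ∑ k, (μ k * Bas.repr x k) • Bas k := by
    conv_lhs => rw [← Bas.sum_repr x]
    rw [map_sum]
    refine Finset.sum_congr rfl fun k _ => ?_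
    rw [map_smul, hT k, smul_smul, mul_comm]
  rw [hTx, inner_sum]
  refine Finset.sum_congr rfl fun k _ => ?_
  rw [real_inner_smul_right, real_inner_comm, ← Bas.repr_apply_apply]
  ring

lemma weyl_repr_zero (t : Set (Fin n)) (x : EuclideanSpace ℝ (Fin n))
    (hx : x ∈ Submodule.span ℝ (⇑Bas '' t)) {k : Fin n} (hk : k ∉ t) :
    Bas.repr x k = 0 := by
  rw [Bas.repr_apply_apply]
  induction hx using Submodule.span_induction with
  | mem y hy =>
    obtain ⟨k', hk', rfl⟩ := hy
    exact Bas.orthonormal.2 (fun h => hk (h ▸ hk'))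
  | zero => simp
  | add y z _ _ hy hz => rw [inner_add_right, hy, hz, add_zero]
  | smul c y _ hy => rw [inner_smul_right, hy, mul_zero]

lemma weyl_quad_le (hT : ∀ k, T (Bas k) = μ k • Bas k) (t : Set (Fin n)) (m : ℝ)
    (hm : ∀ k ∈ t, μ k ≤ m) (x : EuclideanSpace ℝ (Fin n))
    (hx : x ∈ Submodule.span ℝ (⇑Bas '' t)) :
    ⟪x, T x⟫ ≤ m * ⟪x, x⟫ := by
  classical
  have hid : ⟪x, x⟫ = ∑ k, (1 : ℝ) * (Bas.repr x k)^2 := by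
    have := weyl_quad Bas LinearMap.id (fun _ => (1 : ℝ)) (fun k => by simp) x
    simpa using this
  rw [weyl_quad Bas T μ hT x, hid, Finset.mul_sum]
  refine Finset.sum_le_sum fun k _ => ?_
  by_cases hk : k ∈ t
  · have := hm k hk
    nlinarith [sq_nonneg (Bas.repr x k)]
  · rw [weyl_repr_zero Bas t x hx hk]; simp

lemma weyl_quad_ge (hT : ∀ k, T (Bas k) = μ k • Bas k) (t : Set (Fin n)) (m : ℝ)
    (hm : ∀ k ∈ t, m ≤ μ k) (x : EuclideanSpace ℝ (Fin n))
    (hx : x ∈ Submodule.span ℝ (⇑Bas '' t)) :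
    m * ⟪x, x⟫ ≤ ⟪x, T x⟫ := by
  have := weyl_quad_le Bas (-T) (-μ) (fun k => by simp [hT k]) t (-m)
    (fun k hk => neg_le_neg (hm k hk)) x hx
  simp only [LinearMap.neg_apply, inner_neg_right, neg_mul] at this
  linarith

lemma weyl_finrank_span (t : Finset (Fin n)) :
    Module.finrank ℝ (Submodule.span ℝ (⇑Bas '' ↑t)) = t.card := by
  classical
  have hon : Orthonormal ℝ (fun k : {x // x ∈ t} => Bas k) :=
    Bas.orthonormal.comp _ Subtype.val_injective
  have hli := hon.linearIndependent
  have hr : Set.range (fun k : {x // x ∈ t} => Bas k) = ⇑Bas '' ↑t := by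
    ext y; simp [Set.mem_image]
  rw [← hr, finrank_span_eq_card hli, Fintype.card_coe]

end aux

/-- Weyl's inequality: for symmetric n×n real matrices A, B with
eigenvalues listed in decreasing order a, b, c (for A, B and A + B resp.),
the (i+j+1)-th (0-based) largest eigenvalue of A + B is at most the sum of the
(i+1)-th largest eigenvalue of A and the (j+1)-th largest eigenvalue of B. -/
theorem stmt3 {n : ℕ} (A B : Matrix (Fin n) (Fin n) ℝ)
    (hA : A.IsHermitian) (hB : B.IsHermitian) (hAB : (A + B).IsHermitian)
    (a b c : Fin n → ℝ)
    (ha : Antitone a) (hb : Antitone b) (hc : Antitone c)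
    (haE : Multiset.map a Finset.univ.val = Multiset.map hA.eigenvalues Finset.univ.val)
    (hbE : Multiset.map b Finset.univ.val = Multiset.map hB.eigenvalues Finset.univ.val)
    (hcE : Multiset.map c Finset.univ.val = Multiset.map hAB.eigenvalues Finset.univ.val)
    (i j : Fin n) (hij : (i : ℕ) + (j : ℕ) < n) :
    c ⟨(i : ℕ) + (j : ℕ), hij⟩ ≤ a i + b j := by
  classical
  obtain ⟨σa, hσa⟩ := weyl_exists_perm haE
  obtain ⟨σb, hσb⟩ := weyl_exists_perm hbE
  obtain ⟨σc, hσc⟩ := weyl_exists_perm hcE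
  set TA := Matrix.toEuclideanLin A with hTA
  set TB := Matrix.toEuclideanLin B with hTB
  -- eigen action lemmas
  have eig : ∀ (M : Matrix (Fin n) (Fin n) ℝ) (hM : M.IsHermitian) (k : Fin n),
      Matrix.toEuclideanLin M (hM.eigenvectorBasis k)
        = hM.eigenvalues k • hM.eigenvectorBasis k := by
    intro M hM k
    apply (WithLp.equiv 2 (Fin n → ℝ)).injective
    simp only [Matrix.toEuclideanLin_apply, Equiv.apply_symm_apply]
    rw [hM.mulVec_eigenvectorBasis k]
    rfl
  have eigA : ∀ k, TA (hA.eigenvectorBasis k) = hA.eigenvalues k • hA.eigenvectorBasis k :=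
    eig A hA
  have eigB : ∀ k, TB (hB.eigenvectorBasis k) = hB.eigenvalues k • hB.eigenvectorBasis k :=
    eig B hB
  have eigC : ∀ k, (TA + TB) (hAB.eigenvectorBasis k)
      = hAB.eigenvalues k • hAB.eigenvectorBasis k := by
    intro k
    have h1 : TA + TB = Matrix.toEuclideanLin (A + B) := by rw [map_add]
    rw [h1]
    exact eig (A + B) hAB k
  -- subspaces
  set ij : Fin n := ⟨(i : ℕ) + (j : ℕ), hij⟩ with hijdef
  set tA : Finset (Fin n) := (Finset.Ici i).image σa with htA
  set tB : Finset (Fin n) := (Finset.Ici j).image σb with htB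
  set tC : Finset (Fin n) := (Finset.Iic ij).image σc with htC
  set U := Submodule.span ℝ (⇑hA.eigenvectorBasis '' ↑tA) with hU
  set V := Submodule.span ℝ (⇑hB.eigenvectorBasis '' ↑tB) with hV
  set W := Submodule.span ℝ (⇑hAB.eigenvectorBasis '' ↑tC) with hW
  have hdimU : Module.finrank ℝ U = n - i := by
    rw [hU, weyl_finrank_span, htA, Finset.card_image_of_injective _ σa.injective, Fin.card_Ici]
  have hdimV : Module.finrank ℝ V = n - j := by
    rw [hV, weyl_finrank_span, htB, Finset.card_image_of_injective _ σb.injective, Fin.card_Ici]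
  have hdimW : Module.finrank ℝ W = (i : ℕ) + j + 1 := by
    rw [hW, weyl_finrank_span, htC, Finset.card_image_of_injective _ σc.injective, Fin.card_Iic]
  have hn : Module.finrank ℝ (EuclideanSpace ℝ (Fin n)) = n := finrank_euclideanSpace_fin
  -- intersection is nontrivial
  have hUV : n - (i : ℕ) - j ≤ Module.finrank ℝ (U ⊓ V : Submodule ℝ _) := by
    have h1 := Submodule.finrank_sup_add_finrank_inf_eq U V
    have h2 : Module.finrank ℝ (U ⊔ V : Submodule ℝ _) ≤ n :=
      le_trans (Submodule.finrank_le _) (le_of_eq hn)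
    have hi := i.2; have hj := j.2
    omega
  have hUVW : 0 < Module.finrank ℝ (U ⊓ V ⊓ W : Submodule ℝ _) := by
    have h1 := Submodule.finrank_sup_add_finrank_inf_eq (U ⊓ V) W
    have h2 : Module.finrank ℝ ((U ⊓ V) ⊔ W : Submodule ℝ _) ≤ n :=
      le_trans (Submodule.finrank_le _) (le_of_eq hn)
    omega
  have hnt : Nontrivial ↥(U ⊓ V ⊓ W) := Module.finrank_pos_iff.mp hUVW
  obtain ⟨⟨x, hxmem⟩, hxne⟩ := exists_ne (0 : ↥(U ⊓ V ⊓ W))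
  have hx0 : x ≠ 0 := fun h => hxne (by simp [h])
  obtain ⟨⟨hxU, hxV⟩, hxW⟩ := hxmem
  -- bounds
  have hboundA : ⟪x, TA x⟫ ≤ a i * ⟪x, x⟫ := by
    refine weyl_quad_le _ _ _ eigA ↑tA (a i) (fun k hk => ?_) x hxU
    obtain ⟨k', hk', rfl⟩ := Finset.mem_image.mp hk
    have : hA.eigenvalues (σa k') = a k' := by rw [hσa]; rfl
    rw [this]; exact ha (Finset.mem_Ici.mp hk')
  have hboundB : ⟪x, TB x⟫ ≤ b j * ⟪x, x⟫ := by
    refine weyl_quad_le _ _ _ eigB ↑tB (b j) (fun k hk => ?_) x hxV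
    obtain ⟨k', hk', rfl⟩ := Finset.mem_image.mp hk
    have : hB.eigenvalues (σb k') = b k' := by rw [hσb]; rfl
    rw [this]; exact hb (Finset.mem_Ici.mp hk')
  have hboundC : c ij * ⟪x, x⟫ ≤ ⟪x, (TA + TB) x⟫ := by
    refine weyl_quad_ge _ _ _ eigC ↑tC (c ij) (fun k hk => ?_) x hxW
    obtain ⟨k', hk', rfl⟩ := Finset.mem_image.mp hk
    have : hAB.eigenvalues (σc k') = c k' := by rw [hσc]; rfl
    rw [this]; exact hc (Finset.mem_Iic.mp hk')
  have hsplit : ⟪x, (TA + TB) x⟫ = ⟪x, TA x⟫ + ⟪x, TB x⟫ := by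
    rw [LinearMap.add_apply, inner_add_right]
  have hxx : 0 < ⟪x, x⟫ := by
    rw [real_inner_self_eq_norm_mul_norm]
    exact mul_pos (norm_pos_iff.mpr hx0) (norm_pos_iff.mpr hx0)
  have : c ij * ⟪x, x⟫ ≤ (a i + b j) * ⟪x, x⟫ := by
    rw [add_mul]; linarith [hboundC, hsplit, hboundA, hboundB]
  exact le_of_mul_le_mul_right (by linarith) hxx
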